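/- Let φ : ℝ → ℝ be continuously differentiable and strictly increasing, let a ∈ ℝ, l > 0, T ∈ ℝ, let p ≥ 1 be an integer, and let A_p < B_p be reverse-iterate endpoints with φ^[p](A_p) = T and φ^[p](B_p) = T + 2l. If {f_n}_{n=0}^∞ is an orthogonal system in L²([a, a+2l]) (i.e. ∫_a^{a+2l} f_m(t) f_n(t) dt = 0 for all m ≠ n), then the transformed functions f_n^{p}(t) := f_n(u_p(t)) · w_p(t) satisfy ∫_a^{a+2l} f_m^{p}(t) f_n^{p}(t) dt = 0 for all m ≠ n, and moreover ∫_a^{a+2l} (f_n^{p}(t))² dt = (2l/(B_p − A_p)) ∫_a^{a+2l} f_n(t)² dt for every n. In particular {f_n^{p}}_{n=0}^∞ is again an orthogonal system in L²([a, a+2l]). -/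

import Mathlib

open MeasureTheory Set

/-- The affine map `ρ_p` sending `[a, a+2l]` onto `[A, B]`. -/
noncomputable def rhoMap (A B a l : ℝ) (t : ℝ) : ℝ := (B - A) / (2 * l) * (t - a) + A

/-- The map `u_p(t) = φ^[p](ρ_p(t)) − T + a`. -/
noncomputable def uMap (φ : ℝ → ℝ) (p : ℕ) (A B a l T : ℝ) (t : ℝ) : ℝ :=
  φ^[p] (rhoMap A B a l t) - T + a

/-- The weight `w_p(t) = ∏_{r=0}^{p−1} √(φ′(φ^[r](ρ_p(t))))`. -/
noncomputable def wMap (φ : ℝ → ℝ) (p : ℕ) (A B a l : ℝ) (t : ℝ) : ℝ :=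
  ∏ r ∈ Finset.range p, Real.sqrt (deriv φ (φ^[r] (rhoMap A B a l t)))

/-!
By the chain rule, `u_p' = w_p² · (B_p − A_p)/(2l)`: the weight squared is exactly the Jacobian
of `u_p` up to the constant factor coming from `ρ_p`. Since `u_p` is monotone and maps `a` to `a`
and `a + 2l` to `a + 2l`, the substitution `x = u_p(t)` turns `∫ w_p² · F ∘ u_p` into
`(2l/(B_p − A_p)) ∫ F` for every `F`. Taking `F = f_m f_n` gives both claims.
-/

theorem hasDerivAt_iterate_of_differentiable {𝕜 : Type*} [NontriviallyNormedField 𝕜]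
    {f : 𝕜 → 𝕜} (hf : Differentiable 𝕜 f) (n : ℕ) (x : 𝕜) :
    HasDerivAt f^[n] (∏ r ∈ Finset.range n, deriv f (f^[r] x)) x := by
  induction n with
  | zero => simpa using hasDerivAt_id x
  | succ n ih =>
    rw [Function.iterate_succ', Finset.prod_range_succ, mul_comm]
    exact (hf _).hasDerivAt.comp x ih

section Transform

variable {φ : ℝ → ℝ} {p : ℕ} {A B a l T : ℝ}

lemma hasDerivAt_rhoMap (t : ℝ) : HasDerivAt (rhoMap A B a l) ((B - A) / (2 * l)) t := by
  unfold rhoMap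
  simpa using (((hasDerivAt_id t).sub_const a).const_mul ((B - A) / (2 * l))).add_const A

lemma rhoMap_left : rhoMap A B a l a = A := by
  simp [rhoMap]

lemma rhoMap_right (hl : l ≠ 0) : rhoMap A B a l (a + 2 * l) = B := by
  simp only [rhoMap, add_sub_cancel_left]
  field_simp
  ring

lemma wMap_sq (hφ : Monotone φ) (t : ℝ) :
    wMap φ p A B a l t ^ 2 = ∏ r ∈ Finset.range p, deriv φ (φ^[r] (rhoMap A B a l t)) := by
  rw [wMap, ← Finset.prod_pow]
  exact Finset.prod_congr rfl fun r _ => Real.sq_sqrt hφ.deriv_nonneg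

lemma hasDerivAt_uMap (hφ : Differentiable ℝ φ) (hmono : Monotone φ) (t : ℝ) :
    HasDerivAt (uMap φ p A B a l T) (wMap φ p A B a l t ^ 2 * ((B - A) / (2 * l))) t := by
  rw [wMap_sq hmono]
  exact (((hasDerivAt_iterate_of_differentiable hφ p _).comp t
    (hasDerivAt_rhoMap t)).sub_const T).add_const a

lemma uMap_left (hA : φ^[p] A = T) : uMap φ p A B a l T a = a := by
  simp [uMap, rhoMap_left, hA]

lemma uMap_right (hl : l ≠ 0) (hB : φ^[p] B = T + 2 * l) :
    uMap φ p A B a l T (a + 2 * l) = a + 2 * l := by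
  simp only [uMap, rhoMap_right hl, hB]
  ring

theorem integral_wMap_sq_mul_comp_uMap (hφ : Differentiable ℝ φ) (hmono : Monotone φ)
    (hl : 0 < l) (hAB : A < B) (hA : φ^[p] A = T) (hB : φ^[p] B = T + 2 * l) (F : ℝ → ℝ) :
    ∫ t in a..(a + 2 * l), wMap φ p A B a l t ^ 2 * F (uMap φ p A B a l T t)
      = 2 * l / (B - A) * ∫ t in a..(a + 2 * l), F t := by
  have hab : a ≤ a + 2 * l := by linarith
  have hBA : 0 < B - A := sub_pos.2 hAB
  have hc : 0 < (B - A) / (2 * l) := by positivity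
  have hu : ∀ t, HasDerivAt (uMap φ p A B a l T) _ t := hasDerivAt_uMap hφ hmono
  have hsubst := integral_Icc_deriv_smul_of_deriv_nonneg (g := F)
    (fun t _ => (hu t).continuousAt.continuousWithinAt) (fun t _ => hu t)
    (fun t _ => mul_nonneg (sq_nonneg _) hc.le) hab
  rw [uMap_left hA, uMap_right hl.ne' hB] at hsubst
  simp only [smul_eq_mul, mul_right_comm _ ((B - A) / (2 * l)), integral_mul_const,
    integral_Icc_eq_integral_Ioc] at hsubst
  rw [intervalIntegral.integral_of_le hab, intervalIntegral.integral_of_le hab, ← hsubst]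
  field_simp [hBA.ne']

end Transform

theorem first_generation_orthogonal_general
    (φ : ℝ → ℝ) (hφ : ContDiff ℝ 1 φ) (hmono : StrictMono φ)
    (a l T : ℝ) (hl : 0 < l) (p : ℕ)
    (A B : ℝ) (hAB : A < B) (hA : φ^[p] A = T) (hB : φ^[p] B = T + 2 * l)
    (f : ℕ → ℝ → ℝ)
    (horth : ∀ m n, m ≠ n → ∫ t in a..(a + 2 * l), f m t * f n t = 0) :
    (∀ m n, m ≠ n →
      ∫ t in a..(a + 2 * l),
        (f m (uMap φ p A B a l T t) * wMap φ p A B a l t) *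
          (f n (uMap φ p A B a l T t) * wMap φ p A B a l t) = 0) ∧
    (∀ n, ∫ t in a..(a + 2 * l),
        (f n (uMap φ p A B a l T t) * wMap φ p A B a l t) ^ 2
          = (2 * l / (B - A)) * ∫ t in a..(a + 2 * l), (f n t) ^ 2) := by
  have hpair : ∀ m n, ∫ t in a..(a + 2 * l),
        (f m (uMap φ p A B a l T t) * wMap φ p A B a l t) *
          (f n (uMap φ p A B a l T t) * wMap φ p A B a l t)
        = 2 * l / (B - A) * ∫ t in a..(a + 2 * l), f m t * f n t := fun m n => by
    rw [← integral_wMap_sq_mul_comp_uMap (hφ.differentiable one_ne_zero) hmono.monotone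
      hl hAB hA hB]
    congr 1 with t
    ring
  refine ⟨fun m n hmn => by rw [hpair, horth m n hmn, mul_zero], fun n => ?_⟩
  simpa only [sq] using hpair n n

/-- The first-generation transform of an `L²`-orthogonal system on
`[a, a+2l]` is again an orthogonal system, with norms rescaled by `2l/(B_p − A_p)`. -/
theorem first_generation_orthogonal
    (φ : ℝ → ℝ) (hφ : ContDiff ℝ 1 φ) (hmono : StrictMono φ)
    (a l T : ℝ) (hl : 0 < l) (p : ℕ) (hp : 1 ≤ p)
    (A B : ℝ) (hAB : A < B) (hA : φ^[p] A = T) (hB : φ^[p] B = T + 2 * l)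
    (f : ℕ → ℝ → ℝ)
    (hf : ∀ n, MemLp (f n) 2 (volume.restrict (Set.Ioc a (a + 2 * l))))
    (horth : ∀ m n, m ≠ n → ∫ t in a..(a + 2 * l), f m t * f n t = 0) :
    (∀ m n, m ≠ n →
      ∫ t in a..(a + 2 * l),
        (f m (uMap φ p A B a l T t) * wMap φ p A B a l t) *
          (f n (uMap φ p A B a l T t) * wMap φ p A B a l t) = 0) ∧
    (∀ n, ∫ t in a..(a + 2 * l),
        (f n (uMap φ p A B a l T t) * wMap φ p A B a l t) ^ 2
          = (2 * l / (B - A)) * ∫ t in a..(a + 2 * l), (f n t) ^ 2) :=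
  first_generation_orthogonal_general φ hφ hmono a l T hl p A B hAB hA hB f horth
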